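/- Every two-player miner's dilemma game with betrayal assumption admits at least one pure Nash equilibrium, i.e., there exists (x1*,x2*) ∈ [0,m1]×[0,m2] with r1(x1*,x2*) ≥ r1(x1,x2*) for all x1 ∈ [0,m1] and r2(x1*,x2*) ≥ r2(x1*,x2) for all x2 ∈ [0,m2]. -/

import Mathlib

/-- Average reward of pool 1 in the two-player miner's dilemma with betrayal,
where the total mining power is `m1 + m2 + t`. -/
noncomputable def r1 (m1 m2 t p x1 x2 : ℝ) : ℝ :=
  (m1*m2 + m1*x1 + p*m2*x2 - (1-p)*x1^2 - (1-p)*x1*x2) /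
    (((m1+m2+t) - (1-p)*(x1+x2)) * (m1*m2 + m1*x1 + m2*x2))

/-- Average reward of pool 2. -/
noncomputable def r2 (m1 m2 t p x1 x2 : ℝ) : ℝ :=
  (m1*m2 + m2*x2 + p*m1*x1 - (1-p)*x2^2 - (1-p)*x1*x2) /
    (((m1+m2+t) - (1-p)*(x1+x2)) * (m1*m2 + m1*x1 + m2*x2))

/-- `(x1, x2)` is a pure Nash equilibrium of the two-player miner's dilemma game. -/
noncomputable def IsNash (m1 m2 t p x1 x2 : ℝ) : Prop :=
  x1 ∈ Set.Icc 0 m1 ∧ x2 ∈ Set.Icc 0 m2 ∧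
  (∀ x ∈ Set.Icc (0:ℝ) m1, r1 m1 m2 t p x x2 ≤ r1 m1 m2 t p x1 x2) ∧
  (∀ x ∈ Set.Icc (0:ℝ) m2, r2 m1 m2 t p x1 x ≤ r2 m1 m2 t p x1 x2)

/-!
Up to a positive factor, `∂r₁/∂x₁` is a quadratic in `x₁` with negative linear coefficient that
is nonpositive at `x₁ = m₁`, and `r₁(·, x₂)` is maximised wherever this quadratic satisfies the
first-order condition on `[0, m₁]`. Hence pool 1's best response is the smaller root of the
quadratic clamped to `[0, m₁]`, which depends continuously on `x₂`; symmetrically for pool 2.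
A fixed point of the composite best response `[0, m₂] → [0, m₂]`, given by the intermediate
value theorem, is a Nash equilibrium as long as the reward denominators stay positive. That
fails at `(m₁, m₂)` when `t = p = 0`, where an explicit equilibrium is used instead.
-/

open Set

/-- The smaller root `(-b - √Δ) / (2a)` of `a x² + b x + c` in rationalised form, which also
covers `a = 0`; its denominator is positive when `b < 0`. -/
noncomputable def smallRoot (a b c : ℝ) : ℝ := 2 * c / (-b + √(discrim a b c))

section SmallRoot

variable {a b c : ℝ}

lemma smallRoot_den_pos (hb : b < 0) : 0 < -b + √(discrim a b c) := by
  have := Real.sqrt_nonneg (discrim a b c)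
  linarith

lemma smallRoot_mul_den (hb : b < 0) : smallRoot a b c * (-b + √(discrim a b c)) = 2 * c :=
  div_mul_cancel₀ _ (smallRoot_den_pos hb).ne'

lemma smallRoot_pos_iff (hb : b < 0) : 0 < smallRoot a b c ↔ 0 < c := by
  rw [smallRoot, div_pos_iff_of_pos_right (smallRoot_den_pos hb)]
  constructor <;> intro h <;> linarith

lemma two_mul_mul_smallRoot (hb : b < 0) (hd : 0 ≤ discrim a b c) :
    2 * a * smallRoot a b c = -b - √(discrim a b c) := by
  have hs : √(discrim a b c) ^ 2 = b ^ 2 - 4 * a * c := Real.sq_sqrt hd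
  have h : (2 * a * smallRoot a b c + b + √(discrim a b c)) * (-b + √(discrim a b c)) = 0 := by
    linear_combination 2 * a * smallRoot_mul_den (a := a) (c := c) hb + hs
  linarith [(mul_eq_zero.1 h).resolve_right (smallRoot_den_pos hb).ne']

lemma quadratic_eq_smallRoot (hb : b < 0) (hd : 0 ≤ discrim a b c) (x : ℝ) :
    a * x ^ 2 + b * x + c =
      (smallRoot a b c - x) * (a * (smallRoot a b c - x) + √(discrim a b c)) := by
  linear_combination (x - smallRoot a b c / 2) * two_mul_mul_smallRoot hb hd
    - smallRoot_mul_den (a := a) (c := c) hb / 2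

lemma quadratic_smallRoot (hb : b < 0) (hd : 0 ≤ discrim a b c) :
    a * smallRoot a b c ^ 2 + b * smallRoot a b c + c = 0 := by
  rw [quadratic_eq_smallRoot hb hd, sub_self, zero_mul]

lemma discrim_nonneg_of_quadratic_nonpos (hc : 0 < c) {y : ℝ} (hy : a * y ^ 2 + b * y + c ≤ 0) :
    0 ≤ discrim a b c := by
  by_contra! hd
  rw [discrim] at hd
  have ha : 0 < a := by nlinarith [sq_nonneg b]
  nlinarith [sq_nonneg (2 * a * y + b)]

lemma quadratic_nonneg_of_le_smallRoot (hb : b < 0) {x : ℝ} (hx0 : 0 ≤ x)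
    (hx : x ≤ smallRoot a b c) : 0 ≤ a * x ^ 2 + b * x + c := by
  rcases lt_or_ge (discrim a b c) 0 with hd | hd
  · have hc : 0 ≤ c := by
      nlinarith [smallRoot_mul_den (a := a) (c := c) hb, smallRoot_den_pos (a := a) (c := c) hb]
    rw [discrim] at hd
    have ha : 0 < a := by nlinarith [sq_nonneg b]
    nlinarith [sq_nonneg (2 * a * x + b)]
  · rw [quadratic_eq_smallRoot hb hd]
    refine mul_nonneg (sub_nonneg.2 hx) ?_
    rcases le_or_gt 0 a with ha | ha
    · nlinarith [Real.sqrt_nonneg (discrim a b c), mul_nonneg ha (sub_nonneg.2 hx)]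
    · nlinarith [two_mul_mul_smallRoot hb hd, Real.sqrt_nonneg (discrim a b c)]

lemma quadratic_clamp_smallRoot_mul_sub_nonpos (hb : b < 0) {m : ℝ} (hm : 0 ≤ m)
    (hqm : a * m ^ 2 + b * m + c ≤ 0) {x : ℝ} (hx : x ∈ Icc 0 m) :
    (a * min (max (smallRoot a b c) 0) m ^ 2 + b * min (max (smallRoot a b c) 0) m + c) *
      (x - min (max (smallRoot a b c) 0) m) ≤ 0 := by
  rcases le_or_gt (smallRoot a b c) 0 with h0 | h0
  · have hc : c ≤ 0 := not_lt.1 fun hc => (not_lt.2 h0) ((smallRoot_pos_iff hb).2 hc)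
    rw [max_eq_right h0, min_eq_left hm]
    simpa using mul_nonpos_of_nonpos_of_nonneg hc hx.1
  · rw [max_eq_left h0.le]
    rcases le_total (smallRoot a b c) m with hρm | hmρ
    · have hd := discrim_nonneg_of_quadratic_nonpos ((smallRoot_pos_iff hb).1 h0) hqm
      rw [min_eq_left hρm, quadratic_smallRoot hb hd, zero_mul]
    · rw [min_eq_right hmρ, le_antisymm hqm (quadratic_nonneg_of_le_smallRoot hb hm hmρ), zero_mul]

end SmallRoot

namespace MinersDilemma

noncomputable def marginalA (m1 m2 t p x2 : ℝ) : ℝ := (1 - p) * m2 * x2 - m1 * (t + m2 * p)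

noncomputable def marginalB (m1 m2 t p x2 : ℝ) : ℝ :=
  2 * m2 * ((1 - p) * x2 ^ 2 - (t + m2) * (x2 + m1))

noncomputable def marginalC (m1 m2 t p x2 : ℝ) : ℝ :=
  m2 * ((1 - p) * x2 ^ 3 - t * x2 ^ 2 - (1 - p) * m2 * x2 ^ 2 - m1 * x2 ^ 2
    + (1 + p) * m1 * m2 * x2 + m1 ^ 2 * m2)

/-- `(1 - p) * marginal m1 m2 t p x2 x / D²`, with `D` the denominator of `r1`, is the partial
derivative of `r1` in its first strategy at `(x, x2)`. -/
noncomputable def marginal (m1 m2 t p x2 x : ℝ) : ℝ :=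
  marginalA m1 m2 t p x2 * x ^ 2 + marginalB m1 m2 t p x2 * x + marginalC m1 m2 t p x2

section Marginal

variable {m1 m2 t p x2 : ℝ}

lemma marginalB_neg (hm1 : 0 < m1) (hm2 : 0 < m2) (ht : 0 ≤ t) (hp0 : 0 ≤ p)
    (hx2 : x2 ∈ Icc 0 m2) : marginalB m1 m2 t p x2 < 0 := by
  obtain ⟨hx20, hx2m⟩ := hx2
  unfold marginalB
  nlinarith [mul_nonneg hp0 (sq_nonneg x2), mul_nonneg hx20 (sub_nonneg.2 hx2m),
    mul_nonneg ht (add_nonneg hx20 hm1.le), mul_pos hm2 hm1]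

lemma marginal_self_nonpos (hm1 : 0 < m1) (hm2 : 0 < m2) (ht : 0 ≤ t) (hp0 : 0 ≤ p)
    (hp1 : p ≤ 1) (hx2 : x2 ∈ Icc 0 m2) : marginal m1 m2 t p x2 m1 ≤ 0 := by
  obtain ⟨hx20, hx2m⟩ := hx2
  have key : marginal m1 m2 t p x2 m1 =
      -((1 - p) * m2 * (m2 - x2) * (m1 ^ 2 + m1 * x2 + x2 ^ 2)
        + p * m1 * m2 * (m1 ^ 2 + m1 * m2 + x2 ^ 2)
        + t * (m1 ^ 3 + 2 * m1 ^ 2 * m2 + 2 * m1 * m2 * x2 + m2 * x2 ^ 2)) := by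
    unfold marginal marginalA marginalB marginalC
    ring
  rw [key, neg_nonpos]
  have : 0 ≤ 1 - p := sub_nonneg.2 hp1
  have : 0 ≤ m2 - x2 := sub_nonneg.2 hx2m
  bound

end Marginal

lemma one_sub_mul_lt {m t p s : ℝ} (hm : 0 < m) (ht : 0 ≤ t) (hp0 : 0 ≤ p)
    (htp : 0 < t ∨ 0 < p) (hs0 : 0 ≤ s) (hs : s ≤ m) : (1 - p) * s < m + t := by
  rcases htp with h | h
  · nlinarith [mul_nonneg hp0 hs0]
  · nlinarith [mul_pos h hm, mul_nonneg hp0 hs0]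

/-- The cross-multiplied difference `r₁(x₁, x₂) - r₁(x, x₂)` is
`(1 - p) (F (x - x₁)² - marginal(x₁) (x - x₁))` with `F ≥ 0`, so the first-order condition at `x₁`
already makes `x₁` a global maximiser. -/
lemma r1_le_r1_of_marginal_mul_sub_nonpos {m1 m2 t p x1 x2 x : ℝ} (hm1 : 0 < m1) (hm2 : 0 < m2)
    (ht : 0 ≤ t) (hp0 : 0 ≤ p) (hp1 : p ≤ 1) (hx1 : x1 ∈ Icc 0 m1) (hx2 : x2 ∈ Icc 0 m2)
    (hden : (1 - p) * (m1 + x2) < m1 + m2 + t) (hfoc : marginal m1 m2 t p x2 x1 * (x - x1) ≤ 0)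
    (hx : x ∈ Icc 0 m1) : r1 m1 m2 t p x x2 ≤ r1 m1 m2 t p x1 x2 := by
  obtain ⟨hx10, hx1m⟩ := hx1
  obtain ⟨hx20, hx2m⟩ := hx2
  have hq : 0 ≤ 1 - p := sub_nonneg.2 hp1
  have hA : ∀ y ≤ m1, 0 < (m1 + m2 + t) - (1 - p) * (y + x2) := fun y hy => by
    nlinarith [mul_le_mul_of_nonneg_left hy hq]
  have hB : ∀ y, 0 ≤ y → 0 < m1 * m2 + m1 * y + m2 * x2 := fun y hy => by positivity
  unfold r1
  rw [div_le_div_iff₀ (mul_pos (hA x hx.2) (hB x hx.1)) (mul_pos (hA x1 hx1m) (hB x1 hx10))]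
  have key : (m1*m2 + m1*x1 + p*m2*x2 - (1-p)*x1^2 - (1-p)*x1*x2) *
        (((m1+m2+t) - (1-p)*(x+x2)) * (m1*m2 + m1*x + m2*x2))
      - (m1*m2 + m1*x + p*m2*x2 - (1-p)*x^2 - (1-p)*x*x2) *
        (((m1+m2+t) - (1-p)*(x1+x2)) * (m1*m2 + m1*x1 + m2*x2))
      = (1 - p) * ((t * (m1*m2 + m1*x1 + m2*x2) + p*m1*m2*x1 + m2*x2*(m2 - (1-p)*x2)
          + m2*(m1*m2 - (1-p)*x1*x2)) * (x - x1)^2 - marginal m1 m2 t p x2 x1 * (x - x1)) := by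
    unfold marginal marginalA marginalB marginalC
    ring
  have : 0 ≤ m2 - (1 - p) * x2 := by nlinarith [mul_nonneg hp0 hx20]
  have : 0 ≤ m1 * m2 - (1 - p) * x1 * x2 := by
    nlinarith [mul_nonneg hp0 (mul_nonneg hx10 hx20), mul_le_mul hx1m hx2m hx20 hm1.le]
  have hF : 0 ≤ t * (m1*m2 + m1*x1 + m2*x2) + p*m1*m2*x1 + m2*x2*(m2 - (1-p)*x2)
      + m2*(m1*m2 - (1-p)*x1*x2) := by
    bound
  linarith [mul_nonneg hq (sub_nonneg.2 (hfoc.trans (mul_nonneg hF (sq_nonneg (x - x1)))))]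

lemma r2_eq_r1 (m1 m2 t p x1 x2 : ℝ) : r2 m1 m2 t p x1 x2 = r1 m2 m1 t p x2 x1 := by
  unfold r1 r2
  ring

lemma isNash_comm {m1 m2 t p x1 x2 : ℝ} : IsNash m1 m2 t p x1 x2 ↔ IsNash m2 m1 t p x2 x1 := by
  unfold IsNash
  simp only [r2_eq_r1]
  tauto

lemma isNash_of_marginal {m1 m2 t p x1 x2 : ℝ} (hm1 : 0 < m1) (hm2 : 0 < m2) (ht : 0 ≤ t)
    (hp0 : 0 ≤ p) (hp1 : p ≤ 1) (hx1 : x1 ∈ Icc 0 m1) (hx2 : x2 ∈ Icc 0 m2)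
    (hden1 : (1 - p) * (m1 + x2) < m1 + m2 + t) (hden2 : (1 - p) * (m2 + x1) < m2 + m1 + t)
    (hfoc1 : ∀ x ∈ Icc 0 m1, marginal m1 m2 t p x2 x1 * (x - x1) ≤ 0)
    (hfoc2 : ∀ x ∈ Icc 0 m2, marginal m2 m1 t p x1 x2 * (x - x2) ≤ 0) :
    IsNash m1 m2 t p x1 x2 :=
  ⟨hx1, hx2,
    fun x hx =>
      r1_le_r1_of_marginal_mul_sub_nonpos hm1 hm2 ht hp0 hp1 hx1 hx2 hden1 (hfoc1 x hx) hx,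
    fun x hx => by
      simpa only [r2_eq_r1] using
        r1_le_r1_of_marginal_mul_sub_nonpos hm2 hm1 ht hp0 hp1 hx2 hx1 hden2 (hfoc2 x hx) hx⟩

noncomputable def bestResponse (m1 m2 t p x2 : ℝ) : ℝ :=
  min (max (smallRoot (marginalA m1 m2 t p x2) (marginalB m1 m2 t p x2)
    (marginalC m1 m2 t p x2)) 0) m1

section BestResponse

variable {m1 m2 t p x2 : ℝ}

lemma bestResponse_mem_Icc (hm1 : 0 ≤ m1) : bestResponse m1 m2 t p x2 ∈ Icc 0 m1 :=
  ⟨le_min (le_max_right _ _) hm1, min_le_right _ _⟩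

lemma marginal_bestResponse_mul_sub_nonpos (hm1 : 0 < m1) (hm2 : 0 < m2) (ht : 0 ≤ t)
    (hp0 : 0 ≤ p) (hp1 : p ≤ 1) (hx2 : x2 ∈ Icc 0 m2) {x : ℝ} (hx : x ∈ Icc 0 m1) :
    marginal m1 m2 t p x2 (bestResponse m1 m2 t p x2) * (x - bestResponse m1 m2 t p x2) ≤ 0 :=
  quadratic_clamp_smallRoot_mul_sub_nonpos (marginalB_neg hm1 hm2 ht hp0 hx2) hm1.le
    (marginal_self_nonpos hm1 hm2 ht hp0 hp1 hx2) hx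

lemma continuousOn_bestResponse (hm1 : 0 < m1) (hm2 : 0 < m2) (ht : 0 ≤ t) (hp0 : 0 ≤ p) :
    ContinuousOn (bestResponse m1 m2 t p) (Icc 0 m2) := by
  have hρ : ContinuousOn (fun y => smallRoot (marginalA m1 m2 t p y) (marginalB m1 m2 t p y)
      (marginalC m1 m2 t p y)) (Icc 0 m2) := by
    refine ContinuousOn.div (by unfold marginalC; fun_prop) ?_
      fun y hy => (smallRoot_den_pos (marginalB_neg hm1 hm2 ht hp0 hy)).ne'
    unfold discrim marginalA marginalB marginalC
    fun_prop
  exact ((continuous_id.max continuous_const).min continuous_const).comp_continuousOn hρ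

end BestResponse

theorem exists_isNash_of_pos {m1 m2 t p : ℝ} (hm1 : 0 < m1) (hm2 : 0 < m2) (ht : 0 ≤ t)
    (hp0 : 0 ≤ p) (hp1 : p ≤ 1) (htp : 0 < t ∨ 0 < p) : ∃ x1 x2, IsNash m1 m2 t p x1 x2 := by
  have hmaps : MapsTo (bestResponse m1 m2 t p) (Icc 0 m2) (Icc 0 m1) :=
    fun _ _ => bestResponse_mem_Icc hm1.le
  obtain ⟨x2, hx2, hfix⟩ := exists_mem_Icc_isFixedPt_of_mapsTo
    ((continuousOn_bestResponse hm2 hm1 ht hp0).comp (continuousOn_bestResponse hm1 hm2 ht hp0)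
      hmaps) hm2.le fun _ _ => bestResponse_mem_Icc hm2.le
  have hx1 := hmaps hx2
  refine ⟨bestResponse m1 m2 t p x2, x2, isNash_of_marginal hm1 hm2 ht hp0 hp1 hx1 hx2
    (one_sub_mul_lt (by positivity) ht hp0 htp (by linarith [hx2.1]) (by linarith [hx2.2]))
    (one_sub_mul_lt (by positivity) ht hp0 htp (by linarith [hx1.1]) (by linarith [hx1.2]))
    (fun x hx => marginal_bestResponse_mul_sub_nonpos hm1 hm2 ht hp0 hp1 hx2 hx) fun x hx => ?_⟩
  have := marginal_bestResponse_mul_sub_nonpos hm2 hm1 ht hp0 hp1 hx1 hx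
  rwa [show bestResponse m2 m1 t p (bestResponse m1 m2 t p x2) = x2 from hfix] at this

lemma isNash_zero_half {m1 m2 : ℝ} (hm1 : 0 < m1) (h : 4 * m1 ≤ m2) :
    IsNash m1 m2 0 0 0 (m2 / 2) := by
  have hm2 : 0 < m2 := by linarith
  refine isNash_of_marginal hm1 hm2 le_rfl le_rfl zero_le_one ⟨le_rfl, hm1.le⟩
    ⟨by positivity, by linarith⟩ (by linarith) (by linarith) (fun x hx => ?_) fun x _ => ?_
  · have key : marginal m1 m2 0 0 (m2 / 2) 0 = -(m2 ^ 2 / 8) * (m2 - 4 * m1) * (m2 + 2 * m1) := by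
      unfold marginal marginalA marginalB marginalC
      ring
    have : 0 ≤ m2 ^ 2 * (m2 - 4 * m1) * (m2 + 2 * m1) :=
      mul_nonneg (mul_nonneg (sq_nonneg m2) (by linarith)) (by linarith)
    rw [key, sub_zero]
    exact mul_nonpos_of_nonpos_of_nonneg (by linarith) hx.1
  · have key : marginal m2 m1 0 0 0 (m2 / 2) = 0 := by
      unfold marginal marginalA marginalB marginalC
      ring
    rw [key, zero_mul]

/-- The witness lies on the line `x₁ + x₂ = ab`, along which both marginals reduce (up to the
factors `b²` and `-a²`) to the same quadratic in `x₁`; it is the smaller root of that quadratic. -/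
lemma isNash_interior {a b : ℝ} (ha : 0 < a) (hb : 0 < b) (hab : b ≤ 2 * a) (hba : a ≤ 2 * b) :
    IsNash (a ^ 2) (b ^ 2) 0 0 (a * b * (2 * a - b) / (a + b)) (a * b * (2 * b - a) / (a + b)) := by
  have hs : 0 < a + b := by positivity
  have hx1 : a * b * (2 * a - b) / (a + b) < a ^ 2 := by
    rw [div_lt_iff₀ hs]
    nlinarith [sq_nonneg (a - b), mul_pos ha hb]
  have hx2 : a * b * (2 * b - a) / (a + b) < b ^ 2 := by
    rw [div_lt_iff₀ hs]
    nlinarith [sq_nonneg (a - b), mul_pos ha hb]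
  refine isNash_of_marginal (by positivity) (by positivity) le_rfl le_rfl zero_le_one
    ⟨by bound, hx1.le⟩ ⟨by bound, hx2.le⟩ (by linarith) (by linarith) (fun x _ => ?_) fun x _ => ?_
  · have key : marginal (a ^ 2) (b ^ 2) 0 0 (a * b * (2 * b - a) / (a + b))
        (a * b * (2 * a - b) / (a + b)) = 0 := by
      unfold marginal marginalA marginalB marginalC
      field_simp
      ring
    rw [key, zero_mul]
  · have key : marginal (b ^ 2) (a ^ 2) 0 0 (a * b * (2 * a - b) / (a + b))
        (a * b * (2 * b - a) / (a + b)) = 0 := by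
      unfold marginal marginalA marginalB marginalC
      field_simp
      ring
    rw [key, zero_mul]

theorem exists_isNash_zero_zero {m1 m2 : ℝ} (hm1 : 0 < m1) (hm2 : 0 < m2) :
    ∃ x1 x2, IsNash m1 m2 0 0 x1 x2 := by
  rcases le_or_gt (4 * m1) m2 with h | h
  · exact ⟨_, _, isNash_zero_half hm1 h⟩
  rcases le_or_gt (4 * m2) m1 with h' | h'
  · exact ⟨_, _, isNash_comm.2 (isNash_zero_half hm2 h')⟩
  obtain ⟨a, ha, rfl⟩ : ∃ a, 0 < a ∧ a ^ 2 = m1 := ⟨√m1, Real.sqrt_pos.2 hm1, Real.sq_sqrt hm1.le⟩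
  obtain ⟨b, hb, rfl⟩ : ∃ b, 0 < b ∧ b ^ 2 = m2 := ⟨√m2, Real.sqrt_pos.2 hm2, Real.sq_sqrt hm2.le⟩
  exact ⟨_, _, isNash_interior ha hb (by nlinarith) (by nlinarith)⟩

end MinersDilemma

theorem stmt1 (m1 m2 t p : ℝ) (hm1 : 0 < m1) (hm2 : 0 < m2) (ht : 0 ≤ t)
    (hp0 : 0 ≤ p) (hp1 : p < 1) :
    ∃ x1 x2 : ℝ, IsNash m1 m2 t p x1 x2 := by
  by_cases htp : 0 < t ∨ 0 < p
  · exact MinersDilemma.exists_isNash_of_pos hm1 hm2 ht hp0 hp1.le htp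
  · obtain ⟨htp0, hpp0⟩ := not_or.1 htp
    obtain ⟨rfl, rfl⟩ : t = 0 ∧ p = 0 :=
      ⟨le_antisymm (not_lt.1 htp0) ht, le_antisymm (not_lt.1 hpp0) hp0⟩
    exact MinersDilemma.exists_isNash_zero_zero hm1 hm2
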